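/- arXiv:2604.13606 — 2 statements merged into one kernel-verified Lean document; each statement's English description precedes it below -/
import Mathlib

section
/- Let G be a d-degenerate graph with d ≥ 1, let v_1,…,v_m be a minimal-p ordering of G, and let V* = {v_1,…,v_{p(G)}}. Then every vertex v ∈ V* has at least d neighbours inside V*, i.e. |N_G(v) ∩ V*| ≥ d for every v ∈ V*. -/
open Finset

/-- `G` is `d`-degenerate: every nonempty (induced) subgraph contains a vertex of
degree at most `d`. -/
def Degen {V : Type*} [DecidableEq V] (G : SimpleGraph V) [DecidableRel G.Adj]
    (d : ℕ) : Prop :=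
  ∀ s : Finset V, s.Nonempty → ∃ v ∈ s, (s.filter (fun u => G.Adj v u)).card ≤ d

/-- `e` is a degeneracy ordering of `G` for the parameter `d`: each vertex has at most `d`
neighbours among the earlier vertices. -/
def IsDegOrd {V : Type*} [Fintype V] [DecidableEq V] (G : SimpleGraph V)
    [DecidableRel G.Adj] (d : ℕ) (e : Fin (Fintype.card V) ≃ V) : Prop :=
  ∀ i, (Finset.univ.filter (fun j => j < i ∧ G.Adj (e i) (e j))).card ≤ d

/-- The parameter `p` of a degeneracy ordering `e`: the largest (1-based) index whose
vertex has exactly `d` earlier neighbours, and `0` if there is no such index. -/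
def ordP {V : Type*} [Fintype V] [DecidableEq V] (G : SimpleGraph V)
    [DecidableRel G.Adj] (d : ℕ) (e : Fin (Fintype.card V) ≃ V) : ℕ :=
  (Finset.univ.filter (fun i =>
    (Finset.univ.filter (fun j => j < i ∧ G.Adj (e i) (e j))).card = d)).sup
      (fun i => (i : ℕ) + 1)

/-- `p(G)`: the minimum of `ordP` over all degeneracy orderings of `G`. -/
noncomputable def pMin {V : Type*} [Fintype V] [DecidableEq V] (G : SimpleGraph V)
    [DecidableRel G.Adj] (d : ℕ) : ℕ :=
  sInf {p | ∃ e : Fin (Fintype.card V) ≃ V, IsDegOrd G d e ∧ ordP G d e = p}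

/-- `V*` of an ordering `e`: the set of its first `ordP G d e` vertices. -/
def Vstar {V : Type*} [Fintype V] [DecidableEq V] (G : SimpleGraph V)
    [DecidableRel G.Adj] (d : ℕ) (e : Fin (Fintype.card V) ≃ V) : Finset V :=
  (Finset.univ.filter (fun i : Fin (Fintype.card V) => (i : ℕ) < ordP G d e)).image e

def tauF (m i p : ℕ) (hip : i < p) (hpm : p ≤ m) (j : Fin m) : Fin m :=
  ⟨if (j : ℕ) < i ∨ p ≤ (j : ℕ) then (j : ℕ)
    else if (j : ℕ) = p - 1 then i else (j : ℕ) + 1, by split_ifs <;> omega⟩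

def tauG (m i p : ℕ) (hip : i < p) (hpm : p ≤ m) (j : Fin m) : Fin m :=
  ⟨if (j : ℕ) < i ∨ p ≤ (j : ℕ) then (j : ℕ)
    else if (j : ℕ) = i then p - 1 else (j : ℕ) - 1, by split_ifs <;> omega⟩

lemma tauF_val (m i p : ℕ) (hip : i < p) (hpm : p ≤ m) (j : Fin m) :
    (tauF m i p hip hpm j : ℕ) =
      if (j : ℕ) < i ∨ p ≤ (j : ℕ) then (j : ℕ)
      else if (j : ℕ) = p - 1 then i else (j : ℕ) + 1 := rfl

lemma tauG_val (m i p : ℕ) (hip : i < p) (hpm : p ≤ m) (j : Fin m) :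
    (tauG m i p hip hpm j : ℕ) =
      if (j : ℕ) < i ∨ p ≤ (j : ℕ) then (j : ℕ)
      else if (j : ℕ) = i then p - 1 else (j : ℕ) - 1 := rfl

def tau (m i p : ℕ) (hip : i < p) (hpm : p ≤ m) : Equiv.Perm (Fin m) where
  toFun := tauF m i p hip hpm
  invFun := tauG m i p hip hpm
  left_inv j := by
    apply Fin.ext
    rw [tauG_val, tauF_val]
    split_ifs <;> omega
  right_inv j := by
    apply Fin.ext
    rw [tauF_val, tauG_val]
    split_ifs <;> omega

lemma tau_val (m i p : ℕ) (hip : i < p) (hpm : p ≤ m) (j : Fin m) :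
    ((tau m i p hip hpm j : Fin m) : ℕ) =
      if (j : ℕ) < i ∨ p ≤ (j : ℕ) then (j : ℕ)
      else if (j : ℕ) = p - 1 then i else (j : ℕ) + 1 := rfl

lemma tau_symm_val (m i p : ℕ) (hip : i < p) (hpm : p ≤ m) (j : Fin m) :
    (((tau m i p hip hpm).symm j : Fin m) : ℕ) =
      if (j : ℕ) < i ∨ p ≤ (j : ℕ) then (j : ℕ)
      else if (j : ℕ) = i then p - 1 else (j : ℕ) - 1 := rfl

lemma card_filter_perm {m : ℕ} (τ : Equiv.Perm (Fin m)) (P : Fin m → Prop) [DecidablePred P] :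
    (univ.filter P).card = (univ.filter fun k => P (τ.symm k)).card := by
  rw [← Finset.card_map τ.toEmbedding, Finset.map_filter]
  simp only [Equiv.toEmbedding_apply, Finset.map_univ_equiv]
  rfl

/-- **Minimum degree inside `V*`.**  Let `G` be a `d`-degenerate graph with `d ≥ 1`, let
`e` be a minimal-`p` degeneracy ordering of `G`, and let `V* = Vstar G d e` be the set of
its first `p(G)` vertices.  Then every vertex `v ∈ V*` has at least `d` neighbours inside
`V*`. -/
theorem Vstar_min_degree (d : ℕ) (hd : 1 ≤ d)
    {V : Type*} [Fintype V] [DecidableEq V]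
    (G : SimpleGraph V) [DecidableRel G.Adj] (hG : Degen G d)
    (e : Fin (Fintype.card V) ≃ V)
    (he : IsDegOrd G d e)
    (hminp : ∀ e' : Fin (Fintype.card V) ≃ V, IsDegOrd G d e' → ordP G d e ≤ ordP G d e') :
    ∀ v ∈ Vstar G d e, d ≤ ((Vstar G d e).filter (fun u => G.Adj v u)).card := by
  classical
  intro v hv
  by_contra hlt
  push_neg at hlt
  obtain ⟨i₀, hi₀mem, rfl⟩ := Finset.mem_image.mp hv
  have hi₀ : (i₀ : ℕ) < ordP G d e := (Finset.mem_filter.mp hi₀mem).2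
  set p := ordP G d e with hpdef
  have hpm : p ≤ Fintype.card V := by
    rw [hpdef, ordP]
    exact Finset.sup_le fun i _ => i.isLt
  have hle : ∀ j : Fin (Fintype.card V),
      (univ.filter (fun k => k < j ∧ G.Adj (e j) (e k))).card = d → (j : ℕ) + 1 ≤ p := by
    intro j hj
    rw [hpdef, ordP]
    exact Finset.le_sup (f := fun i : Fin (Fintype.card V) => (i : ℕ) + 1)
      (Finset.mem_filter.mpr ⟨Finset.mem_univ _, hj⟩)
  set τ := tau (Fintype.card V) (i₀ : ℕ) p hi₀ hpm with hτdef
  set e' := τ.trans e with he'def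
  have he'app : ∀ k, e' k = e (τ k) := fun k => rfl
  -- reindexing of the earlier-neighbour count of e'
  have hc' : ∀ j : Fin (Fintype.card V), (univ.filter fun k => k < j ∧ G.Adj (e' j) (e' k)).card
      = (univ.filter fun k => τ.symm k < j ∧ G.Adj (e (τ j)) (e k)).card := by
    intro j
    rw [card_filter_perm τ (fun k => k < j ∧ G.Adj (e' j) (e' k))]
    congr 1
    apply Finset.filter_congr
    intro k _
    simp [he'def, Equiv.trans_apply, Equiv.apply_symm_apply]
  -- the count of neighbours of v in Vstar, in index form
  have himg : (Vstar G d e).filter (fun u => G.Adj (e i₀) u)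
      = (univ.filter fun k : Fin (Fintype.card V) => (k : ℕ) < p ∧ G.Adj (e i₀) (e k)).image e := by
    ext u
    simp only [Vstar, Finset.mem_filter, Finset.mem_image, Finset.mem_univ, true_and,
      ← hpdef]
    constructor
    · rintro ⟨⟨k, hk, rfl⟩, ha⟩; exact ⟨k, ⟨hk, ha⟩, rfl⟩
    · rintro ⟨k, ⟨hk, ha⟩, rfl⟩; exact ⟨⟨k, hk, rfl⟩, ha⟩
  have hVlt : (univ.filter fun k : Fin (Fintype.card V) => (k : ℕ) < p ∧ G.Adj (e i₀) (e k)).card < d := by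
    rw [himg, Finset.card_image_of_injective _ e.injective] at hlt
    exact hlt
  -- the three regimes
  have hlow : ∀ j : Fin (Fintype.card V), ((j : ℕ) < (i₀ : ℕ) ∨ p ≤ (j : ℕ)) →
      (univ.filter fun k => τ.symm k < j ∧ G.Adj (e (τ j)) (e k))
        = (univ.filter fun k => k < j ∧ G.Adj (e j) (e k)) := by
    intro j hj
    have hτj : τ j = j := by
      apply Fin.ext
      rw [hτdef, tau_val]
      split_ifs <;> omega
    rw [hτj]
    apply Finset.filter_congr
    intro k _
    have hiff : (τ.symm k < j) ↔ (k < j) := by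
      rw [Fin.lt_def, Fin.lt_def, hτdef, tau_symm_val]
      split_ifs <;> omega
    rw [hiff]
  have hmid : ∀ j j' : Fin (Fintype.card V), (i₀ : ℕ) ≤ (j : ℕ) → (j' : ℕ) = (j : ℕ) + 1 → (j : ℕ) + 1 < p →
      (univ.filter fun k => τ.symm k < j ∧ G.Adj (e (τ j)) (e k)).card
        ≤ (univ.filter fun k => k < j' ∧ G.Adj (e j') (e k)).card := by
    intro j j' hij hj' hjp
    have hτj : τ j = j' := by
      apply Fin.ext
      rw [hτdef, tau_val]
      split_ifs <;> omega
    rw [hτj]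
    apply Finset.card_le_card
    intro k hk
    simp only [Finset.mem_filter, Finset.mem_univ, true_and] at hk ⊢
    refine ⟨?_, hk.2⟩
    have := hk.1
    rw [Fin.lt_def] at this ⊢
    rw [hτdef, tau_symm_val] at this
    split_ifs at this <;> omega
  have htop : ∀ j : Fin (Fintype.card V), (j : ℕ) = p - 1 →
      (univ.filter fun k => τ.symm k < j ∧ G.Adj (e (τ j)) (e k)).card
        ≤ (univ.filter fun k : Fin (Fintype.card V) => (k : ℕ) < p ∧ G.Adj (e i₀) (e k)).card := by
    intro j hj
    have hτj : τ j = i₀ := by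
      apply Fin.ext
      rw [hτdef, tau_val]
      split_ifs <;> omega
    rw [hτj]
    apply Finset.card_le_card
    intro k hk
    simp only [Finset.mem_filter, Finset.mem_univ, true_and] at hk ⊢
    refine ⟨?_, hk.2⟩
    have := hk.1
    rw [Fin.lt_def] at this
    rw [hτdef, tau_symm_val] at this
    split_ifs at this <;> omega
  -- e' is a degeneracy ordering
  have hdeg' : IsDegOrd G d e' := by
    intro j
    rw [hc' j]
    rcases Nat.lt_or_ge (j : ℕ) (i₀ : ℕ) with h1 | h1
    · rw [hlow j (Or.inl h1)]; exact he j
    · rcases Nat.lt_or_ge ((j : ℕ) + 1) p with h2 | h2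
      · have hj'lt : (j : ℕ) + 1 < Fintype.card V := by omega
        calc (univ.filter fun k => τ.symm k < j ∧ G.Adj (e (τ j)) (e k)).card
            ≤ _ := hmid j ⟨(j : ℕ) + 1, hj'lt⟩ h1 rfl h2
          _ ≤ d := he _
      · rcases Nat.lt_or_ge (j : ℕ) p with h3 | h3
        · have hj : (j : ℕ) = p - 1 := by omega
          calc (univ.filter fun k => τ.symm k < j ∧ G.Adj (e (τ j)) (e k)).card
              ≤ _ := htop j hj
            _ ≤ d := le_of_lt hVlt
        · rw [hlow j (Or.inr h3)]; exact he j
  -- ordP of e' is at most p - 1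
  have hbound : ordP G d e' ≤ p - 1 := by
    rw [ordP]
    apply Finset.sup_le
    intro j hj
    have hcard := (Finset.mem_filter.mp hj).2
    rw [hc' j] at hcard
    rcases Nat.lt_or_ge (j : ℕ) (i₀ : ℕ) with h1 | h1
    · rw [hlow j (Or.inl h1)] at hcard
      have := hle j hcard
      omega
    · rcases Nat.lt_or_ge ((j : ℕ) + 1) p with h2 | h2
      · omega
      · rcases Nat.lt_or_ge (j : ℕ) p with h3 | h3
        · have hj3 : (j : ℕ) = p - 1 := by omega
          have := htop j hj3
          omega
        · rw [hlow j (Or.inr h3)] at hcard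
          have := hle j hcard
          omega
  have hfinal := hminp e' hdeg'
  omega
end

section
/- Let Δ, d, k be positive integers with (d+1)k ≥ Δ + 1, let G be a graph with maximum degree at most Δ, and let uv be an edge of G. If G − uv has an equitable d-degenerate k-colouring but G does not, then G has a near-equitable d-degenerate k-colouring. -/
open Finset

attribute [local instance] Classical.propDecidable

variable {V : Type*} [Fintype V] [DecidableEq V]

/-- The subgraph of `G` induced on the vertex set `S` is `d`-degenerate: every nonempty
subset of `S` contains a vertex having at most `d` neighbours inside that subset. -/
def DegenOn (G : SimpleGraph V) (d : ℕ) (S : Finset V) : Prop :=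
  ∀ s : Finset V, s ⊆ S → s.Nonempty → ∃ v ∈ s, (s.filter (fun u => G.Adj v u)).card ≤ d

/-- The colour class of colour `i` under the colouring `f`. -/
def cls {k : ℕ} (f : V → Fin k) (i : Fin k) : Finset V :=
  Finset.univ.filter (fun v => f v = i)

/-- `f` is a `d`-degenerate `k`-colouring of `G`: each colour class induces a
`d`-degenerate subgraph. -/
def IsDegenColoring (G : SimpleGraph V) (d : ℕ) {k : ℕ} (f : V → Fin k) : Prop :=
  ∀ i, DegenOn G d (cls f i)

/-- `f` is an equitable colouring: any two colour classes differ in size by at most one. -/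
def IsEquitable {k : ℕ} (f : V → Fin k) : Prop :=
  ∀ i j, (cls f i).card ≤ (cls f j).card + 1

/-- `f` is a near-equitable `k`-colouring of an `n`-vertex graph (conditions (E1),(E2)):
with the colour classes sorted by size, `⌊n/k⌋ − 1 ≤ |C_1| ≤ ⌊n/k⌋ ≤ |C_2| ≤ … ≤
|C_{k−1}| ≤ ⌈n/k⌉ ≤ |C_k| ≤ ⌈n/k⌉ + 1`, and `2 ≤ |C_k| − |C_1| ≤ 3`.  Stated label-free:
all class sizes lie in `[⌊n/k⌋ − 1, ⌈n/k⌉ + 1]`, at most one class is smaller than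
`⌊n/k⌋`, at most one class is larger than `⌈n/k⌉`, some class has size `≤ ⌊n/k⌋`, some
class has size `≥ ⌈n/k⌉`, and the largest class exceeds the smallest by at least `2` and
at most `3`.  (Here `⌈n/k⌉ = (n + k - 1) / k` in natural division.) -/
def NearEquitable (n : ℕ) {k : ℕ} (f : V → Fin k) : Prop :=
  (∀ i, n / k - 1 ≤ (cls f i).card ∧ (cls f i).card ≤ (n + k - 1) / k + 1) ∧
  (Finset.univ.filter (fun i => (cls f i).card < n / k)).card ≤ 1 ∧
  (Finset.univ.filter (fun i => (n + k - 1) / k < (cls f i).card)).card ≤ 1 ∧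
  (∃ i, (cls f i).card ≤ n / k) ∧
  (∃ i, (n + k - 1) / k ≤ (cls f i).card) ∧
  (∃ i j, (cls f i).card + 2 ≤ (cls f j).card) ∧
  (∀ i j, (cls f j).card ≤ (cls f i).card + 3)

/-- The vertex `v` is movable to the colour class of colour `j`: `v` has a different
colour, and adding `v` to that class keeps it `d`-degenerate. -/
def Movable (G : SimpleGraph V) (d : ℕ) {k : ℕ} (f : V → Fin k) (v : V) (j : Fin k) :
    Prop :=
  f v ≠ j ∧ DegenOn G d (insert v (cls f j))

/-- Arc of the auxiliary digraph `D`: there is an arc from colour `i` to colour `j`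
(`i ≠ j`) iff some vertex of class `i` is movable to class `j`. -/
def MvArc (G : SimpleGraph V) (d : ℕ) {k : ℕ} (f : V → Fin k) (i j : Fin k) : Prop :=
  i ≠ j ∧ ∃ v, f v = i ∧ Movable G d f v j

/-- Class `i` is accessible to class `j`: `D` has a (possibly trivial) directed path from
`i` to `j`. -/
def AccTo (G : SimpleGraph V) (d : ℕ) {k : ℕ} (f : V → Fin k) : Fin k → Fin k → Prop :=
  Relation.ReflTransGen (MvArc G d f)

/-- Accessibility within the subdigraph of `D` induced on the set `S` of colours. -/
def AccToWithin (G : SimpleGraph V) (d : ℕ) {k : ℕ} (f : V → Fin k)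
    (S : Finset (Fin k)) : Fin k → Fin k → Prop :=
  Relation.ReflTransGen (fun i j => i ∈ S ∧ j ∈ S ∧ MvArc G d f i j)

/-- Class `i` has minimum size among all colour classes. -/
def IsMinClass {k : ℕ} (f : V → Fin k) (i : Fin k) : Prop :=
  ∀ j, (cls f i).card ≤ (cls f j).card

/-- Class `i` is accessible: it is accessible to some colour class of minimum size. -/
def Accessible (G : SimpleGraph V) (d : ℕ) {k : ℕ} (f : V → Fin k) (i : Fin k) : Prop :=
  ∃ j, IsMinClass f j ∧ AccTo G d f i j

/-- `𝒜`: the set of accessible colours. -/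
noncomputable def Aset (G : SimpleGraph V) (d : ℕ) {k : ℕ} (f : V → Fin k) :
    Finset (Fin k) :=
  Finset.univ.filter (fun i => Accessible G d f i)

/-- `ℬ`: the set of non-accessible colours. -/
noncomputable def Bset (G : SimpleGraph V) (d : ℕ) {k : ℕ} (f : V → Fin k) :
    Finset (Fin k) :=
  Finset.univ.filter (fun i => ¬ Accessible G d f i)

/-- `A`: the union of the accessible colour classes. -/
noncomputable def Averts (G : SimpleGraph V) (d : ℕ) {k : ℕ} (f : V → Fin k) : Finset V :=
  Finset.univ.filter (fun v => Accessible G d f (f v))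

/-- `B`: the union of the non-accessible colour classes. -/
noncomputable def Bverts (G : SimpleGraph V) (d : ℕ) {k : ℕ} (f : V → Fin k) : Finset V :=
  Finset.univ.filter (fun v => ¬ Accessible G d f (f v))

/-- The colours used by the subdigraphs `D_1, …, D_{i-1}` preceding `D_i`. -/
def UsedBefore {k q : ℕ} (𝒟 : Fin q → Finset (Fin k)) (i : Fin q) : Finset (Fin k) :=
  (Finset.univ.filter (fun i' => i' < i)).biUnion 𝒟

/-- `(𝒟, trm)` is the decomposition `D_1, …, D_q` of `𝒜` with terminals
`trm 1, …, trm q`: at each step `i`, `trm i` is the smallest-index minimum-size colour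
class not yet used (here "smallest index" is the smallest colour, the classes being
labelled in non-decreasing order of size), `D_i` consists of the unused accessible classes
accessible to `trm i`, the process exhausts all minimum-size classes, and every accessible
class belongs to some `D_i`. -/
def IsDecomp (G : SimpleGraph V) (d : ℕ) {k : ℕ} (f : V → Fin k) {q : ℕ}
    (𝒟 : Fin q → Finset (Fin k)) (trm : Fin q → Fin k) : Prop :=
  (∀ i : Fin q,
      IsMinClass f (trm i) ∧
      trm i ∉ UsedBefore 𝒟 i ∧
      (∀ j, IsMinClass f j → j ∉ UsedBefore 𝒟 i → trm i ≤ j) ∧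
      (∀ u, u ∈ 𝒟 i ↔
        Accessible G d f u ∧ u ∉ UsedBefore 𝒟 i ∧ AccTo G d f u (trm i))) ∧
  (∀ j, IsMinClass f j → ∃ i, j ∈ 𝒟 i) ∧
  (∀ u, Accessible G d f u → ∃ i, u ∈ 𝒟 i)

/-- `𝒯` for the choice `U` of removed class: the classes of `D_- − U` (here `Dl` is the
vertex set of `D_-` and `Cm` its terminal `C_-`) that are non-accessible to `C_-` in
`D_- − U`. -/
noncomputable def TSet (G : SimpleGraph V) (d : ℕ) {k : ℕ} (f : V → Fin k)
    (Dl : Finset (Fin k)) (Cm U : Fin k) : Finset (Fin k) :=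
  (Dl.erase U).filter (fun W => ¬ AccToWithin G d f (Dl.erase U) W Cm)

/-- `U` is a valid choice of `U_-`: it belongs to `D_-` and minimises the number of
classes of `D_- − U` that are non-accessible to `C_-` there. -/
def IsUminus (G : SimpleGraph V) (d : ℕ) {k : ℕ} (f : V → Fin k)
    (Dl : Finset (Fin k)) (Cm U : Fin k) : Prop :=
  U ∈ Dl ∧ ∀ U' ∈ Dl, (TSet G d f Dl Cm U).card ≤ (TSet G d f Dl Cm U').card

/-- `e` is a degeneracy ordering of the induced subgraph `G[S]` for the parameter `d`. -/
def IsDegOrdOn (G : SimpleGraph V) (d : ℕ) (S : Finset V)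
    (e : Fin S.card ≃ {x // x ∈ S}) : Prop :=
  ∀ i, (Finset.univ.filter (fun j => j < i ∧ G.Adj (e i : V) (e j : V))).card ≤ d

/-- The parameter `p` of a degeneracy ordering of `G[S]`: the largest (1-based) index
whose vertex has exactly `d` earlier neighbours (`0` if none). -/
noncomputable def ordPOn (G : SimpleGraph V) (d : ℕ) (S : Finset V)
    (e : Fin S.card ≃ {x // x ∈ S}) : ℕ :=
  (Finset.univ.filter (fun i =>
    (Finset.univ.filter (fun j => j < i ∧ G.Adj (e i : V) (e j : V))).card = d)).sup
      (fun i => (i : ℕ) + 1)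

/-- `p(G[S])`: the minimum of `ordPOn` over all degeneracy orderings of `G[S]`. -/
noncomputable def pMinOn (G : SimpleGraph V) (d : ℕ) (S : Finset V) : ℕ :=
  sInf {p | ∃ e : Fin S.card ≃ {x // x ∈ S}, IsDegOrdOn G d S e ∧ ordPOn G d S e = p}

/-- `V*` of the ordering `e` of `G[S]`: the set of its first `ordPOn G d S e` vertices. -/
noncomputable def VstarOf (G : SimpleGraph V) (d : ℕ) (S : Finset V)
    (e : Fin S.card ≃ {x // x ∈ S}) : Finset V :=
  (Finset.univ.filter (fun i : Fin S.card => (i : ℕ) < ordPOn G d S e)).image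
    (fun i => (e i : V))

/-- The size of the largest colour class, `|C_k|`. -/
def maxS {k : ℕ} (f : V → Fin k) : ℕ := Finset.univ.sup (fun i => (cls f i).card)

/-- The size of the smallest colour class, `|C_1|`. -/
noncomputable def minS {k : ℕ} (f : V → Fin k) : ℕ := sInf {m | ∃ i, (cls f i).card = m}

/-- `Σ_{V ∈ 𝒯} |V*| = Σ_{V ∈ 𝒯} p(G[V])`. -/
noncomputable def sumT (G : SimpleGraph V) (d : ℕ) {k : ℕ} (f : V → Fin k)
    (𝒯 : Finset (Fin k)) : ℕ :=
  ∑ i ∈ 𝒯, pMinOn G d (cls f i)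

/-- Lexicographic comparison of triples of naturals. -/
def Lex3Le (x y : ℕ × ℕ × ℕ) : Prop :=
  x.1 < y.1 ∨ (x.1 = y.1 ∧ (x.2.1 < y.2.1 ∨ (x.2.1 = y.2.1 ∧ x.2.2 ≤ y.2.2)))

/-- The triple `(|C_k| − |C_1|, b, Σ_{V ∈ 𝒯} |V*|)` associated with a colouring `f` and a
choice `𝒯` of the set of classes `𝒯`. -/
noncomputable def tripleOf (G : SimpleGraph V) (d : ℕ) {k : ℕ} (f : V → Fin k)
    (𝒯 : Finset (Fin k)) : ℕ × ℕ × ℕ :=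
  (maxS f - minS f, (Bset G d f).card, sumT G d f 𝒯)

/-- The near-equitable `d`-degenerate colouring `f` (with its associated set `𝒯f`) is
minimal: its triple `(|C_k| − |C_1|, b, Σ_{V ∈ 𝒯} |V*|)` is lexicographically smallest
among all near-equitable `d`-degenerate `k`-colourings of `G` with their associated
choices of decomposition and `U_-`. -/
def MinimalNE (G : SimpleGraph V) (d : ℕ) {k : ℕ} (f : V → Fin k)
    (𝒯f : Finset (Fin k)) : Prop :=
  ∀ g : V → Fin k, IsDegenColoring G d g → NearEquitable (Fintype.card V) g →
    ∀ (q : ℕ) (hq : 0 < q) (𝒟 : Fin q → Finset (Fin k)) (trm : Fin q → Fin k),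
      IsDecomp G d g 𝒟 trm →
      ∀ U : Fin k,
        IsUminus G d g (𝒟 ⟨q - 1, by omega⟩) (trm ⟨q - 1, by omega⟩) U →
        Lex3Le (tripleOf G d f 𝒯f)
          (tripleOf G d g (TSet G d g (𝒟 ⟨q - 1, by omega⟩) (trm ⟨q - 1, by omega⟩) U))

/-- `G[S]` has an equitable `d`-degenerate `m`-colouring. -/
def HasEqDegenColOn (G : SimpleGraph V) (d : ℕ) (S : Finset V) (m : ℕ) : Prop :=
  ∃ g : V → Fin m,
    (∀ i, DegenOn G d (S.filter (fun v => g v = i))) ∧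
    (∀ i j, (S.filter (fun v => g v = i)).card ≤ (S.filter (fun v => g v = j)).card + 1)

/-!
Start from an equitable `d`-degenerate colouring `g` of `G - uv`. Since `u` has at most
`Δ < (d + 1) k` neighbours, some colour class `C_j` contains at most `d` of them. Moving `u`
into `C_j` gives a `d`-degenerate colouring of `G`: every class other than `C_j` now avoids `u`,
so the edge `uv` cannot lie inside it, and `u` can be put last in a degeneracy ordering of
`C_j + u`. This colouring differs from the equitable `g` by one moved vertex, and it is not
equitable because `G` has no equitable `d`-degenerate colouring, so it is near-equitable.
-/

namespace DegenOn

variable {G : SimpleGraph V} {d : ℕ} {S : Finset V}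

omit [Fintype V] [DecidableEq V] in
theorem mono {T : Finset V} (hS : DegenOn G d S) (hTS : T ⊆ S) : DegenOn G d T :=
  fun s hs => hS s (hs.trans hTS)

omit [Fintype V] [DecidableEq V] in
theorem of_deleteEdges {u v : V} (hS : DegenOn (G.deleteEdges {s(u, v)}) d S) (hu : u ∉ S) :
    DegenOn G d S := by
  intro s hs hne
  obtain ⟨w, hw, hcard⟩ := hS s hs hne
  refine ⟨w, hw, le_trans (card_le_card fun x hx => ?_) hcard⟩
  simp only [mem_filter] at hx ⊢
  have huwx : u ∉ s(w, x) := by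
    rw [Sym2.mem_iff]
    rintro (rfl | rfl)
    exacts [hu (hs hw), hu (hs hx.1)]
  exact ⟨hx.1, (SimpleGraph.deleteEdges_adj ..).mpr
    ⟨hx.2, fun h => huwx (Set.mem_singleton_iff.mp h ▸ Sym2.mem_mk_left u v)⟩⟩

omit [Fintype V] in
theorem insert {u : V} (hS : DegenOn G d S) (hu : (S.filter (G.Adj u ·)).card ≤ d) :
    DegenOn G d (insert u S) := by
  intro s hs hne
  by_cases hus : u ∈ s
  · refine ⟨u, hus, le_trans (card_le_card fun x hx => ?_) hu⟩
    rw [mem_filter] at hx ⊢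
    exact ⟨(mem_insert.mp (hs hx.1)).resolve_left (G.ne_of_adj hx.2).symm, hx.2⟩
  · exact hS s (fun x hx => (mem_insert.mp (hs hx)).resolve_left (ne_of_mem_of_not_mem hx hus))
      hne

omit [Fintype V] in
theorem insert_of_deleteEdges {u v : V} (hS : DegenOn (G.deleteEdges {s(u, v)}) d S)
    (hu : (S.filter (G.Adj u ·)).card ≤ d) : DegenOn G d (Insert.insert u S) := by
  have hS' : DegenOn G d (S.erase u) :=
    (hS.mono (erase_subset u S)).of_deleteEdges (notMem_erase u S)
  have hu' := le_trans (card_le_card (filter_subset_filter _ (erase_subset u S))) hu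
  exact (hS'.insert hu').mono (insert_subset (mem_insert_self u _) (insert_erase_subset u S))

end DegenOn

section Colouring

variable {k : ℕ}

omit [DecidableEq V] in
theorem sum_card_cls (f : V → Fin k) : ∑ i, (cls f i).card = Fintype.card V :=
  (card_eq_sum_card_fiberwise fun x _ => mem_univ (f x)).symm

theorem cls_update_self (f : V → Fin k) (u : V) (j : Fin k) :
    cls (Function.update f u j) j = insert u (cls f j) := by
  ext x
  by_cases hx : x = u <;> simp [cls, hx]

theorem cls_update_of_ne (f : V → Fin k) (u : V) {i j : Fin k} (hij : i ≠ j) :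
    cls (Function.update f u j) i = (cls f i).erase u := by
  ext x
  by_cases hx : x = u <;> simp [cls, hx, Ne.symm hij]

omit [DecidableEq V] in
theorem exists_card_cls_filter_adj_le (G : SimpleGraph V) (f : V → Fin k) {u : V} {d : ℕ}
    (hu : (univ.filter (G.Adj u ·)).card < (d + 1) * k) :
    ∃ j, ((cls f j).filter (G.Adj u ·)).card ≤ d := by
  rw [mul_comm, ← Fintype.card_fin k, ← card_univ] at hu
  obtain ⟨j, -, hj⟩ := exists_card_fiber_lt_of_card_lt_mul (f := f) hu
  refine ⟨j, Nat.lt_succ_iff.mp (lt_of_eq_of_lt (congrArg card ?_) hj)⟩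
  ext x
  simp [cls, and_comm]

theorem IsDegenColoring.update_of_deleteEdges {G : SimpleGraph V} {d : ℕ} {f : V → Fin k}
    {u v : V} (hf : IsDegenColoring (G.deleteEdges {s(u, v)}) d f) {j : Fin k}
    (hj : ((cls f j).filter (G.Adj u ·)).card ≤ d) :
    IsDegenColoring G d (Function.update f u j) := by
  intro i
  rcases eq_or_ne i j with rfl | hij
  · rw [cls_update_self]
    exact (hf i).insert_of_deleteEdges hj
  · rw [cls_update_of_ne f u hij]
    exact ((hf i).mono (erase_subset u _)).of_deleteEdges (notMem_erase u _)

omit [DecidableEq V] in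
theorem IsEquitable.div_le_card_cls {f : V → Fin k} (hf : IsEquitable f) (i : Fin k) :
    Fintype.card V / k ≤ (cls f i).card := by
  have hlt : Fintype.card V < ∑ _j : Fin k, ((cls f i).card + 1) := by
    rw [← sum_card_cls f]
    exact sum_lt_sum (fun j _ => hf j i) ⟨i, mem_univ i, Nat.lt_succ_self _⟩
  simp only [sum_const, card_univ, Fintype.card_fin, smul_eq_mul] at hlt
  exact Nat.lt_succ_iff.mp ((Nat.div_lt_iff_lt_mul i.pos).mpr (by rwa [mul_comm] at hlt))

omit [DecidableEq V] in
theorem IsEquitable.card_cls_le_ceil {f : V → Fin k} (hf : IsEquitable f) (i : Fin k) :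
    (cls f i).card ≤ (Fintype.card V + k - 1) / k := by
  rcases Nat.eq_zero_or_eq_succ_pred (cls f i).card with h0 | hm
  · exact h0 ▸ Nat.zero_le _
  set m := (cls f i).card.pred
  have hlt : ∑ _j : Fin k, m < Fintype.card V := by
    rw [← sum_card_cls f]
    exact sum_lt_sum (fun j _ => by have := hf i j; omega) ⟨i, mem_univ i, by omega⟩
  simp only [sum_const, card_univ, Fintype.card_fin, smul_eq_mul] at hlt
  rw [Nat.le_div_iff_mul_le i.pos, hm, Nat.succ_mul]
  have := i.pos
  rw [mul_comm] at hlt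
  omega

theorem card_cls_update_source_add_one {f : V → Fin k} {u : V} {j : Fin k} (hfu : f u ≠ j) :
    (cls (Function.update f u j) (f u)).card + 1 = (cls f (f u)).card := by
  rw [cls_update_of_ne f u hfu, card_erase_add_one (by simp [cls])]

theorem card_cls_update_target {f : V → Fin k} {u : V} {j : Fin k} (hfu : f u ≠ j) :
    (cls (Function.update f u j) j).card = (cls f j).card + 1 := by
  rw [cls_update_self, card_insert_of_notMem (by simpa [cls] using hfu)]

theorem card_cls_update_of_ne_of_ne (f : V → Fin k) {u : V} {i j : Fin k} (hi : i ≠ f u)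
    (hij : i ≠ j) : (cls (Function.update f u j) i).card = (cls f i).card := by
  rw [cls_update_of_ne f u hij, erase_eq_of_notMem (by simpa [cls] using Ne.symm hi)]

theorem IsEquitable.nearEquitable_update {f : V → Fin k} (hf : IsEquitable f) {u : V}
    {j : Fin k} (hne : ¬ IsEquitable (Function.update f u j)) :
    NearEquitable (Fintype.card V) (Function.update f u j) := by
  have hfu : f u ≠ j := fun h => hne (by rwa [← h, Function.update_eq_self])
  have hfrom := card_cls_update_source_add_one hfu
  have hto := card_cls_update_target hfu
  have hlo := hf.div_le_card_cls
  have hhi := hf.card_cls_le_ceil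
  set f' := Function.update f u j
  set n := Fintype.card V
  have hceil : (n + k - 1) / k ≤ n / k + 1 :=
    (Nat.div_le_div_right (by omega)).trans_eq (Nat.add_div_right n j.pos)
  have hsize : ∀ i, n / k - 1 ≤ (cls f' i).card ∧ (cls f' i).card ≤ (n + k - 1) / k + 1 := by
    intro i
    have := hlo i; have := hhi i
    by_cases h₁ : i = f u
    · subst h₁; omega
    by_cases h₂ : i = j
    · subst h₂; omega
    rw [card_cls_update_of_ne_of_ne f h₁ h₂]; omega
  have hsmall : ∀ i, (cls f' i).card < n / k → i = f u := fun i hi => by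
    by_contra h₁
    have := hlo i
    by_cases h₂ : i = j
    · subst h₂; omega
    rw [card_cls_update_of_ne_of_ne f h₁ h₂] at hi; omega
  have hlarge : ∀ i, (n + k - 1) / k < (cls f' i).card → i = j := fun i hi => by
    by_contra h₂
    have := hhi i
    by_cases h₁ : i = f u
    · subst h₁; omega
    rw [card_cls_update_of_ne_of_ne f h₁ h₂] at hi; omega
  obtain ⟨a, b, hab⟩ : ∃ a b, (cls f' b).card + 1 < (cls f' a).card := by
    simpa [IsEquitable] using hne
  refine ⟨hsize, ?_, ?_, ⟨f u, by have := hhi (f u); omega⟩, ⟨j, by have := hlo j; omega⟩,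
    ⟨b, a, hab⟩, fun a b => by have := hsize a; have := hsize b; omega⟩
  · exact card_le_one.2 fun a ha b hb =>
      (hsmall a (mem_filter.1 ha).2).trans (hsmall b (mem_filter.1 hb).2).symm
  · exact card_le_one.2 fun a ha b hb =>
      (hlarge a (mem_filter.1 ha).2).trans (hlarge b (mem_filter.1 hb).2).symm

end Colouring

theorem near_equitable_of_delete_edge_general (Δ d k : ℕ)
    (hΔk : Δ + 1 ≤ (d + 1) * k)
    (G : SimpleGraph V)
    (hdeg : ∀ v : V, (Finset.univ.filter (fun u => G.Adj v u)).card ≤ Δ)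
    (u v : V)
    (hminus : ∃ g : V → Fin k,
      IsDegenColoring (G.deleteEdges {s(u, v)}) d g ∧ IsEquitable g)
    (hnoeq : ¬ ∃ g : V → Fin k, IsDegenColoring G d g ∧ IsEquitable g) :
    ∃ g : V → Fin k, IsDegenColoring G d g ∧ NearEquitable (Fintype.card V) g := by
  obtain ⟨g, hg, hg_eq⟩ := hminus
  obtain ⟨j, hj⟩ := exists_card_cls_filter_adj_le G g ((hdeg u).trans_lt hΔk)
  have hmoved := hg.update_of_deleteEdges hj
  exact ⟨_, hmoved, hg_eq.nearEquitable_update fun h => hnoeq ⟨_, hmoved, h⟩⟩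

/-- **Lemma 2.2 (setting up).**  Let `Δ, d, k` be positive integers with
`(d+1)k ≥ Δ + 1`, let `G` be a graph with maximum degree at most `Δ`, and let `uv` be an
edge of `G`.  If `G − uv` has an equitable `d`-degenerate `k`-colouring but `G` does not,
then `G` has a near-equitable `d`-degenerate `k`-colouring. -/
theorem near_equitable_of_delete_edge (Δ d k : ℕ) (hΔ : 0 < Δ) (hd : 0 < d) (hk : 0 < k)
    (hΔk : Δ + 1 ≤ (d + 1) * k)
    (G : SimpleGraph V)
    (hdeg : ∀ v : V, (Finset.univ.filter (fun u => G.Adj v u)).card ≤ Δ)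
    (u v : V) (huv : G.Adj u v)
    (hminus : ∃ g : V → Fin k,
      IsDegenColoring (G.deleteEdges {s(u, v)}) d g ∧ IsEquitable g)
    (hnoeq : ¬ ∃ g : V → Fin k, IsDegenColoring G d g ∧ IsEquitable g) :
    ∃ g : V → Fin k, IsDegenColoring G d g ∧ NearEquitable (Fintype.card V) g :=
  near_equitable_of_delete_edge_general Δ d k hΔk G hdeg u v hminus hnoeq
end
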